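/- For all (ℓ,m) ∈ I with m > 0, the point x̄_{ℓ,m} = ((ℓ²−m²+3/4)/(ℓ²−1/4))^{1/2} satisfies a_{ℓ,m} ≤ x̄_{ℓ,m} ≤ 8 a_{ℓ,m}. -/
import Mathlib


open Real Set

/-- Jacobi polynomial `P_j^{(α,α)}` via Rodrigues' formula. -/
noncomputable def jacobiP (j : ℕ) (α : ℝ) (x : ℝ) : ℝ :=
  ((-1 : ℝ) ^ j / (2 ^ j * (Nat.factorial j : ℝ))) * (1 - x ^ 2) ^ (-α) *
    iteratedDeriv j (fun t : ℝ => (1 - t ^ 2) ^ (α + (j : ℝ))) x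

/-- The normalization constant `c_{ℓm}`. -/
noncomputable def cConst (ℓ m : ℝ) : ℝ :=
  Real.sqrt (ℓ * Real.Gamma (ℓ - m + 1/2) * Real.Gamma (ℓ + m + 1/2)) /
    ((2 : ℝ) ^ m * Real.Gamma (ℓ + 1/2))

/-- The function `Y_{ℓ,m}`. -/
noncomputable def Yfun (ℓ m x : ℝ) : ℝ :=
  cConst ℓ m * (1 - x ^ 2) ^ (m / 2) * jacobiP ⌊ℓ - m - 1/2⌋₊ m x

/-- Membership in the index set `I = {(ℓ,m) ∈ (ℕ/2)² : ℓ - m - 1/2 ∈ ℕ}`. -/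
def memI (ℓ m : ℝ) : Prop :=
  (∃ n : ℕ, m = (n : ℝ) / 2) ∧ (∃ j : ℕ, ℓ - m - 1/2 = (j : ℝ))

/-- `b_{ℓ,m} = m / ℓ`. -/
noncomputable def bPt (ℓ m : ℝ) : ℝ := m / ℓ

/-- `a_{ℓ,m} = (1 - b_{ℓ,m}²)^{1/2}`. -/
noncomputable def aPt (ℓ m : ℝ) : ℝ := Real.sqrt (1 - bPt ℓ m ^ 2)

/-- Membership in `ℕ_k = ℕ + (k-1)/2`. -/
def memNk (k : ℕ) (t : ℝ) : Prop := ∃ n : ℕ, t = (n : ℝ) + ((k : ℝ) - 1) / 2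

/-- Membership in `I_d`. -/
def memId (d : ℕ) (ℓ m : ℝ) : Prop := memNk d ℓ ∧ memNk (d - 1) m ∧ m ≤ ℓ

/-- The function `X̃^d_{ℓ,m}`. -/
noncomputable def Xtilde (d : ℕ) (ℓ m x : ℝ) : ℝ :=
  (1 - x ^ 2) ^ (-((d : ℝ) - 2) / 4) * Yfun ℓ m x

/-- The turning point `x̄_{ℓ,m}`. -/
noncomputable def xbar (ℓ m : ℝ) : ℝ :=
  Real.sqrt ((ℓ ^ 2 - m ^ 2 + 3/4) / (ℓ ^ 2 - 1/4))

theorem stmt16 (ℓ m : ℝ) (hI : memI ℓ m) (hm : 0 < m) :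
    aPt ℓ m ≤ xbar ℓ m ∧ xbar ℓ m ≤ 8 * aPt ℓ m := by
  obtain ⟨⟨n, hn⟩, ⟨j, hj⟩⟩ := hI
  have hnpos : (0:ℝ) < (n:ℝ) := by rw [hn] at hm; linarith
  have hn1 : (1:ℝ) ≤ (n:ℝ) := by
    exact_mod_cast Nat.one_le_iff_ne_zero.mpr (by exact_mod_cast hnpos.ne')
  have hm2 : (1:ℝ)/2 ≤ m := by rw [hn]; linarith
  have hjnn : (0:ℝ) ≤ (j:ℝ) := Nat.cast_nonneg j
  have hℓm : m + 1/2 ≤ ℓ := by linarith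
  have hℓ1 : (1:ℝ) ≤ ℓ := by linarith
  have hℓpos : (0:ℝ) < ℓ := by linarith
  have hA : aPt ℓ m = Real.sqrt ((ℓ ^ 2 - m ^ 2) / ℓ ^ 2) := by
    unfold aPt bPt
    congr 1
    field_simp
  have hApos : (0:ℝ) ≤ (ℓ ^ 2 - m ^ 2) / ℓ ^ 2 := by
    apply div_nonneg _ (by positivity)
    nlinarith
  have hden : (0:ℝ) < ℓ ^ 2 - 1/4 := by nlinarith
  constructor
  · rw [hA]
    apply Real.sqrt_le_sqrt
    rw [div_le_div_iff₀ (by positivity) hden]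
    nlinarith
  · rw [hA, xbar]
    have h8 : (8:ℝ) * Real.sqrt ((ℓ ^ 2 - m ^ 2) / ℓ ^ 2)
        = Real.sqrt (64 * ((ℓ ^ 2 - m ^ 2) / ℓ ^ 2)) := by
      rw [Real.sqrt_mul (by norm_num), show Real.sqrt 64 = 8 by
        rw [show (64:ℝ) = 8 ^ 2 by norm_num, Real.sqrt_sq (by norm_num)]]
    rw [h8]
    apply Real.sqrt_le_sqrt
    have hD : ℓ / 2 ≤ ℓ ^ 2 - m ^ 2 := by nlinarith
    rw [show (64:ℝ) * ((ℓ ^ 2 - m ^ 2) / ℓ ^ 2) = (64 * (ℓ ^ 2 - m ^ 2)) / ℓ ^ 2 by ring,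
      div_le_div_iff₀ hden (by positivity)]
    nlinarith [hD, sq_nonneg ℓ, mul_le_mul_of_nonneg_left hD (by nlinarith : (0:ℝ) ≤ 47 * ℓ ^ 2)]
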